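/- arXiv:quant-ph/9612052 — 3 statements merged into one kernel-verified Lean document; each statement's English description precedes it below -/
import Mathlib

section
/- For every λ^p-term M there exists a λ^p'-term C such that M is related to C by the congruence on λ^p-terms generated by the abstraction identity λx.(M₁,…,Mₙ) ≡ (λx.M₁,…,λx.Mₙ) and the application identity (M₁,…,M_m)(N₁,…,N_n) ≡ the collection of all m·n applications M_i N_j. Consequently, under these two identifications, the λ^p-calculus and the λ^p'-calculus have the same terms and the same well-formed formulas. -/
/-- λ^p-terms: M ::= x | M₁ M₂ | λx.M | (M₁, M₂) over a countably infinite
set of variables. -/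
inductive PTerm : Type
  | var : ℕ → PTerm
  | app : PTerm → PTerm → PTerm
  | lam : ℕ → PTerm → PTerm
  | coll : PTerm → PTerm → PTerm

/-- Pure λ-terms among λ^p-terms: no collections anywhere. -/
inductive IsLambda : PTerm → Prop
  | var (x : ℕ) : IsLambda (.var x)
  | app {M N : PTerm} : IsLambda M → IsLambda N → IsLambda (.app M N)
  | lam (x : ℕ) {M : PTerm} : IsLambda M → IsLambda (.lam x M)

/-- λ^p'-terms among λ^p-terms: C ::= M | C₁,C₂ | C₁C₂ with M a pure λ-term;
in particular abstractions occurring in λ^p'-terms have pure λ-term bodies. -/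
inductive IsP' : PTerm → Prop
  | pure {M : PTerm} : IsLambda M → IsP' M
  | coll {C₁ C₂ : PTerm} : IsP' C₁ → IsP' C₂ → IsP' (.coll C₁ C₂)
  | app {C₁ C₂ : PTerm} : IsP' C₁ → IsP' C₂ → IsP' (.app C₁ C₂)

/-- `collOf M [N₁,…,Nₖ]` is the right-associated collection `(M, N₁, …, Nₖ)`. -/
def collOf : PTerm → List PTerm → PTerm
  | M, [] => M
  | M, N :: L => .coll M (collOf N L)

/-- The congruence on λ^p-terms generated by the abstraction identity
λx.(M₁,…,Mₙ) ≡ (λx.M₁,…,λx.Mₙ) and the application identity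
(M₁,…,M_m)(N₁,…,N_n) ≡ the collection of all m·n applications M_i N_j:
the smallest equivalence relation compatible with all term constructors
containing the two identities. -/
inductive CongAI : PTerm → PTerm → Prop
  | refl (M : PTerm) : CongAI M M
  | symm {M N : PTerm} : CongAI M N → CongAI N M
  | trans {M N P : PTerm} : CongAI M N → CongAI N P → CongAI M P
  | app {M M' N N' : PTerm} : CongAI M M' → CongAI N N' → CongAI (.app M N) (.app M' N')
  | lam (x : ℕ) {M M' : PTerm} : CongAI M M' → CongAI (.lam x M) (.lam x M')
  | coll {M M' N N' : PTerm} : CongAI M M' → CongAI N N' → CongAI (.coll M N) (.coll M' N')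
  | absId (x : ℕ) (M : PTerm) (Ms : List PTerm) :
      CongAI (.lam x (collOf M Ms)) (collOf (.lam x M) (Ms.map (.lam x)))
  | appId (M N : PTerm) (Ms Ns : List PTerm) :
      CongAI (.app (collOf M Ms) (collOf N Ns))
        (collOf (.app M N)
          (Ns.map (.app M) ++ Ms.flatMap fun Mi => (N :: Ns).map (.app Mi)))

/-- Coll-trees of pure λ-terms. -/
inductive Good : PTerm → Prop
  | pure {M : PTerm} : IsLambda M → Good M
  | coll {A B : PTerm} : Good A → Good B → Good (.coll A B)

lemma good_isP' {C : PTerm} (h : Good C) : IsP' C := by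
  induction h with
  | pure h => exact .pure h
  | coll _ _ ih1 ih2 => exact .coll ih1 ih2

lemma absId1 (x : ℕ) (A B : PTerm) :
    CongAI (.lam x (.coll A B)) (.coll (.lam x A) (.lam x B)) :=
  CongAI.absId x A [B]

lemma appIdL (A B N : PTerm) :
    CongAI (.app (.coll A B) N) (.coll (.app A N) (.app B N)) :=
  CongAI.appId A N [B] []

lemma appIdR (M A B : PTerm) :
    CongAI (.app M (.coll A B)) (.coll (.app M A) (.app M B)) :=
  CongAI.appId M A [] [B]

lemma distR {C : PTerm} (hC : Good C) :
    ∀ M : PTerm, IsLambda M → ∃ D, Good D ∧ CongAI (.app M C) D := by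
  induction hC with
  | pure h => exact fun M hM => ⟨_, .pure (.app hM h), .refl _⟩
  | @coll A B _ _ ihA ihB =>
    intro M hM
    obtain ⟨Da, hDa, ha⟩ := ihA M hM
    obtain ⟨Db, hDb, hb⟩ := ihB M hM
    exact ⟨.coll Da Db, .coll hDa hDb, (appIdR M A B).trans (.coll ha hb)⟩

lemma distL {C₁ : PTerm} (h₁ : Good C₁) :
    ∀ C₂ : PTerm, Good C₂ → ∃ D, Good D ∧ CongAI (.app C₁ C₂) D := by
  induction h₁ with
  | pure h => exact fun C₂ h₂ => distR h₂ _ h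
  | @coll A B _ _ ihA ihB =>
    intro C₂ h₂
    obtain ⟨Da, hDa, ha⟩ := ihA C₂ h₂
    obtain ⟨Db, hDb, hb⟩ := ihB C₂ h₂
    exact ⟨.coll Da Db, .coll hDa hDb, (appIdL A B C₂).trans (.coll ha hb)⟩

lemma distLam {C : PTerm} (hC : Good C) (x : ℕ) :
    ∃ D, Good D ∧ CongAI (.lam x C) D := by
  induction hC with
  | pure h => exact ⟨_, .pure (.lam x h), .refl _⟩
  | @coll A B _ _ ihA ihB =>
    obtain ⟨Da, hDa, ha⟩ := ihA
    obtain ⟨Db, hDb, hb⟩ := ihB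
    exact ⟨.coll Da Db, .coll hDa hDb, (absId1 x A B).trans (.coll ha hb)⟩

lemma exists_good : ∀ M : PTerm, ∃ C : PTerm, Good C ∧ CongAI M C := by
  intro M
  induction M with
  | var x => exact ⟨_, .pure (.var x), .refl _⟩
  | app M N ihM ihN =>
    obtain ⟨C₁, h₁, e₁⟩ := ihM
    obtain ⟨C₂, h₂, e₂⟩ := ihN
    obtain ⟨D, hD, e⟩ := distL h₁ C₂ h₂
    exact ⟨D, hD, ((CongAI.app e₁ e₂).trans e)⟩
  | lam x M ihM =>
    obtain ⟨C, hC, e⟩ := ihM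
    obtain ⟨D, hD, e'⟩ := distLam hC x
    exact ⟨D, hD, (CongAI.lam x e).trans e'⟩
  | coll M N ihM ihN =>
    obtain ⟨C₁, h₁, e₁⟩ := ihM
    obtain ⟨C₂, h₂, e₂⟩ := ihN
    exact ⟨.coll C₁ C₂, .coll h₁ h₂, .coll e₁ e₂⟩

/-- For every λ^p-term M there exists a λ^p'-term C such that M is related
to C by the congruence generated by the abstraction identity and the
application identity: under these identifications the two calculi have the
same terms. -/
theorem lambdaP_eq_lambdaP' : ∀ M : PTerm, ∃ C : PTerm, IsP' C ∧ CongAI M C := by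
  intro M
  obtain ⟨C, hC, e⟩ := exists_good M
  exact ⟨C, good_isP' hC, e⟩
end

section
/- Strip lemma for γ-reduction in the λ^p-calculus: if M →_γ N₁ (one-step γ-reduction) and M ↠_γ N₂ (γ-reduction), then there exists a λ^p-term N₃ such that N₁ ↠_γ N₃ and N₂ ↠_γ N₃. -/
/-- The congruence on λ^p-terms generated by (ClnOrd) M,N ≡ N,M and
(ClnNest) (M,N),P ≡ M,(N,P): the smallest equivalence relation compatible
with all term constructors containing the two axioms. -/
inductive Cong : PTerm → PTerm → Prop
  | refl (M : PTerm) : Cong M M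
  | symm {M N : PTerm} : Cong M N → Cong N M
  | trans {M N P : PTerm} : Cong M N → Cong N P → Cong M P
  | app {M M' N N' : PTerm} : Cong M M' → Cong N N' → Cong (.app M N) (.app M' N')
  | lam (x : ℕ) {M M' : PTerm} : Cong M M' → Cong (.lam x M) (.lam x M')
  | coll {M M' N N' : PTerm} : Cong M M' → Cong N N' → Cong (.coll M N) (.coll M' N')
  | ord (M N : PTerm) : Cong (.coll M N) (.coll N M)
  | nest (M N P : PTerm) : Cong (.coll (.coll M N) P) (.coll M (.coll N P))

/-- A term is a collection if its outermost constructor is the comma. -/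
def IsColl : PTerm → Prop
  | .coll _ _ => True
  | _ => False

/-- The γ-relation of the λ^p-calculus: it relates each application P Q, where
P is congruent to a collection (M₀,…,M_m) and Q to a collection (N₀,…,N_n)
with at least one of them a proper (more-than-one-element) collection, to the
collection of all applications M_i N_j. -/
inductive Gamma : PTerm → PTerm → Prop
  | mk (P Q M N : PTerm) (Ms Ns : List PTerm)
      (hP : Cong P (collOf M Ms)) (hQ : Cong Q (collOf N Ns))
      (hn : Ms ≠ [] ∨ Ns ≠ []) :
      Gamma (.app P Q)
        (collOf (.app M N)
          (Ns.map (.app M) ++ Ms.flatMap fun Mi => (N :: Ns).map (.app Mi)))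

/-- One-step γ-reduction: the compatible closure (closure under all term
constructors) of the γ-relation. -/
inductive StepG : PTerm → PTerm → Prop
  | gamma {M N : PTerm} : Gamma M N → StepG M N
  | appL {M M' N : PTerm} : StepG M M' → StepG (.app M N) (.app M' N)
  | appR {M N N' : PTerm} : StepG N N' → StepG (.app M N) (.app M N')
  | lam (x : ℕ) {M M' : PTerm} : StepG M M' → StepG (.lam x M) (.lam x M')
  | collL {M M' N : PTerm} : StepG M M' → StepG (.coll M N) (.coll M' N)
  | collR {M N N' : PTerm} : StepG N N' → StepG (.coll M N) (.coll M N')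

/-- γ-reduction ↠_γ : the reflexive-transitive closure of one-step
γ-reduction, on terms considered up to the congruence generated by
(ClnOrd) and (ClnNest). -/
def RedG : PTerm → PTerm → Prop :=
  Relation.ReflTransGen (fun M N => StepG M N ∨ Cong M N)

/-!
γ-reduction modulo the congruence has a normal form that can be computed directly: distributing
applications over collections sends a term to a multiset of non-collection components
(`nfParts`). This multiset is unchanged by congruences and by γ-steps, and every term reduces to
the collection of its components. Hence `N₁` and `N₂` both reduce to the normal form of `M`.
-/

theorem Cong.coll_left_comm (M N P : PTerm) : Cong (.coll M (.coll N P)) (.coll N (.coll M P)) :=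
  ((Cong.nest M N P).symm.trans (Cong.coll (Cong.ord M N) (Cong.refl P))).trans (Cong.nest N M P)

namespace RedG

theorem of_stepG {M N : PTerm} (h : StepG M N) : RedG M N :=
  Relation.ReflTransGen.single (Or.inl h)

theorem of_cong {M N : PTerm} (h : Cong M N) : RedG M N :=
  Relation.ReflTransGen.single (Or.inr h)

theorem trans {M N P : PTerm} (h₁ : RedG M N) (h₂ : RedG N P) : RedG M P :=
  Relation.ReflTransGen.trans h₁ h₂

theorem map {f : PTerm → PTerm} (hs : ∀ {M N}, StepG M N → StepG (f M) (f N))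
    (hc : ∀ {M N}, Cong M N → Cong (f M) (f N)) {M N : PTerm} (h : RedG M N) :
    RedG (f M) (f N) :=
  Relation.ReflTransGen.lift f (fun _ _ h => h.imp hs hc) _ _ h

theorem app {M M' N N' : PTerm} (hM : RedG M M') (hN : RedG N N') :
    RedG (.app M N) (.app M' N') :=
  (hM.map StepG.appL (Cong.app · (Cong.refl N))).trans
    (hN.map StepG.appR (Cong.app (Cong.refl M') ·))

theorem coll {M M' N N' : PTerm} (hM : RedG M M') (hN : RedG N N') :
    RedG (.coll M N) (.coll M' N') :=
  (hM.map StepG.collL (Cong.coll · (Cong.refl N))).trans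
    (hN.map StepG.collR (Cong.coll (Cong.refl M') ·))

end RedG

namespace PTerm

def mkColl : List PTerm → PTerm
  | [] => var 0
  | M :: Ms => collOf M Ms

theorem mkColl_cons_of_ne_nil (M : PTerm) {Ms : List PTerm} (h : Ms ≠ []) :
    mkColl (M :: Ms) = coll M (mkColl Ms) := by
  obtain ⟨N, Ns, rfl⟩ := List.exists_cons_of_ne_nil h
  rfl

theorem cong_mkColl_of_perm {l l' : List PTerm} (h : l.Perm l') : Cong (mkColl l) (mkColl l') := by
  induction h with
  | nil => exact Cong.refl _
  | @cons M l l' h ih =>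
    obtain rfl | hl := eq_or_ne l []
    · rw [List.Perm.nil_eq h]
      exact Cong.refl _
    · rw [mkColl_cons_of_ne_nil M hl, mkColl_cons_of_ne_nil M fun h' => hl (h' ▸ h).eq_nil]
      exact Cong.coll (Cong.refl M) ih
  | swap M N l =>
    obtain rfl | hl := eq_or_ne l []
    · exact Cong.ord N M
    · simp only [mkColl_cons_of_ne_nil _ hl, mkColl_cons_of_ne_nil _ (List.cons_ne_nil _ _)]
      exact Cong.coll_left_comm N M _
  | trans _ _ ih₁ ih₂ => exact ih₁.trans ih₂

theorem cong_mkColl_append {l l' : List PTerm} (hl : l ≠ []) (hl' : l' ≠ []) :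
    Cong (mkColl (l ++ l')) (coll (mkColl l) (mkColl l')) := by
  induction l with
  | nil => exact absurd rfl hl
  | cons M l ih =>
    obtain rfl | hne := eq_or_ne l []
    · rw [List.singleton_append, mkColl_cons_of_ne_nil M hl']
      exact Cong.refl _
    · rw [List.cons_append, mkColl_cons_of_ne_nil M (by simp [hne]), mkColl_cons_of_ne_nil M hne]
      exact (Cong.coll (Cong.refl M) (ih hne)).trans (Cong.nest _ _ _).symm

def apps (s t : Multiset PTerm) : Multiset PTerm :=
  s.bind fun M => t.map (app M)

theorem apps_coe (l l' : List PTerm) :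
    apps l l' = ((l.flatMap fun M => l'.map (app M) : List PTerm) : Multiset PTerm) := by
  simp [apps, ← Multiset.coe_bind]

noncomputable def nfParts : PTerm → Multiset PTerm
  | var x => {var x}
  | app M N => apps (nfParts M) (nfParts N)
  | lam x M => {lam x (mkColl (nfParts M).toList)}
  | coll M N => nfParts M + nfParts N

-- `Multiset.toList` picks one order of the components; by `cong_nf_mkColl` any other is congruent.
noncomputable def nf (M : PTerm) : PTerm :=
  mkColl (nfParts M).toList

theorem nfParts_ne_zero (M : PTerm) : nfParts M ≠ 0 := by
  induction M with
  | app M N ihM ihN =>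
    obtain ⟨P, hP⟩ := Multiset.exists_mem_of_ne_zero ihM
    obtain ⟨Q, hQ⟩ := Multiset.exists_mem_of_ne_zero ihN
    exact ne_of_mem_of_not_mem'
      (Multiset.mem_bind.2 ⟨P, hP, Multiset.mem_map_of_mem _ hQ⟩) (Multiset.notMem_zero _)
  | _ => simp_all [nfParts]

theorem nfParts_collOf (M : PTerm) (Ms : List PTerm) :
    nfParts (collOf M Ms) = ((M :: Ms : List PTerm) : Multiset PTerm).bind nfParts := by
  induction Ms generalizing M with
  | nil => simp [collOf]
  | cons N Ns ih => simp [collOf, nfParts, ih, ← Multiset.cons_coe]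

theorem bind_nfParts_apps (s t : Multiset PTerm) :
    (apps s t).bind nfParts = apps (s.bind nfParts) (t.bind nfParts) := by
  simp only [apps, nfParts, Multiset.bind_assoc, Multiset.bind_map, Multiset.map_bind]
  congr 1
  ext1 M
  exact Multiset.bind_bind _ _

theorem nfParts_eq_of_cong {M N : PTerm} (h : Cong M N) : nfParts M = nfParts N := by
  induction h with
  | refl => rfl
  | symm _ ih => exact ih.symm
  | trans _ _ ih₁ ih₂ => exact ih₁.trans ih₂
  | app _ _ ih₁ ih₂ | coll _ _ ih₁ ih₂ => simp only [nfParts, ih₁, ih₂]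
  | lam x _ ih => simp only [nfParts, ih]
  | ord M N => exact add_comm _ _
  | nest M N P => exact add_assoc _ _ _

theorem nfParts_eq_of_gamma {M N : PTerm} (h : Gamma M N) : nfParts M = nfParts N := by
  obtain ⟨P, Q, M, N, Ms, Ns, hP, hQ, -⟩ := h
  rw [nfParts, nfParts_eq_of_cong hP, nfParts_eq_of_cong hQ, nfParts_collOf, nfParts_collOf,
    ← bind_nfParts_apps, apps_coe, nfParts_collOf]
  rfl

theorem nfParts_eq_of_stepG {M N : PTerm} (h : StepG M N) : nfParts M = nfParts N := by
  induction h with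
  | gamma h => exact nfParts_eq_of_gamma h
  | appL _ ih | appR _ ih | lam _ _ ih | collL _ ih | collR _ ih => simp only [nfParts, ih]

theorem nf_eq_of_redG {M N : PTerm} (h : RedG M N) : nf M = nf N := by
  induction h with
  | refl => rfl
  | tail _ h ih => rw [ih, nf, nf, h.elim nfParts_eq_of_stepG nfParts_eq_of_cong]

theorem mkColl_toList_singleton (M : PTerm) : mkColl ({M} : Multiset PTerm).toList = M := by
  rw [Multiset.toList_singleton]
  rfl

theorem toList_nfParts_ne_nil (M : PTerm) : (nfParts M).toList ≠ [] := by
  simpa using nfParts_ne_zero M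

theorem cong_nf_mkColl {M : PTerm} {l : List PTerm} (h : (l : Multiset PTerm) = nfParts M) :
    Cong (nf M) (mkColl l) :=
  cong_mkColl_of_perm (Multiset.coe_eq_coe.1 (by rw [Multiset.coe_toList, h]))

theorem redG_app_collOf (M N : PTerm) (Ms Ns : List PTerm) :
    RedG (app (collOf M Ms) (collOf N Ns))
      (mkColl ((M :: Ms).flatMap fun Mi => (N :: Ns).map (app Mi))) := by
  by_cases hn : Ms ≠ [] ∨ Ns ≠ []
  · exact RedG.of_stepG (StepG.gamma (Gamma.mk _ _ M N Ms Ns (Cong.refl _) (Cong.refl _) hn))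
  · obtain ⟨rfl, rfl⟩ : Ms = [] ∧ Ns = [] := by simpa using hn
    exact Relation.ReflTransGen.refl

theorem redG_nf (M : PTerm) : RedG M (nf M) := by
  induction M with
  | var x => rw [nf, nfParts, mkColl_toList_singleton]; exact Relation.ReflTransGen.refl
  | lam x M ih =>
    rw [nf, nfParts, mkColl_toList_singleton]
    exact ih.map (StepG.lam x) (Cong.lam x)
  | coll M N ihM ihN =>
    refine (ihM.coll ihN).trans (RedG.of_cong ?_)
    refine ((cong_mkColl_append (toList_nfParts_ne_nil M) (toList_nfParts_ne_nil N)).symm.trans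
      (cong_nf_mkColl ?_).symm)
    rw [← Multiset.coe_add, Multiset.coe_toList, Multiset.coe_toList, nfParts]
  | app M N ihM ihN =>
    obtain ⟨P, Ps, hP⟩ := List.exists_cons_of_ne_nil (toList_nfParts_ne_nil M)
    obtain ⟨Q, Qs, hQ⟩ := List.exists_cons_of_ne_nil (toList_nfParts_ne_nil N)
    refine (ihM.app ihN).trans ?_
    rw [nf, nf, hP, hQ]
    refine (redG_app_collOf P Q Ps Qs).trans (RedG.of_cong (cong_nf_mkColl ?_).symm)
    rw [← apps_coe, ← hP, ← hQ, Multiset.coe_toList, Multiset.coe_toList, nfParts]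

end PTerm

/-- Strip lemma for γ-reduction in the λ^p-calculus: if M →_γ N₁ (one-step
γ-reduction) and M ↠_γ N₂ (γ-reduction), then there is a λ^p-term N₃ such
that N₁ ↠_γ N₃ and N₂ ↠_γ N₃. -/
theorem gamma_strip_lemma (M N₁ N₂ : PTerm) (h₁ : StepG M N₁) (h₂ : RedG M N₂) :
    ∃ N₃ : PTerm, RedG N₁ N₃ ∧ RedG N₂ N₃ := by
  refine ⟨PTerm.nf M, ?_, ?_⟩
  · rw [PTerm.nf_eq_of_redG (RedG.of_stepG h₁)]
    exact PTerm.redG_nf N₁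
  · rw [PTerm.nf_eq_of_redG h₂]
    exact PTerm.redG_nf N₂
end

section
/- Existence of γ-normal forms: for every λ^p-term M there exists a λ^p-term N such that M ↠_γ N and N contains no γ-redexes (no subterm of N is an application P Q in which P or Q is a collection). -/
/-- A term is in γ-normal form if it contains no γ-redex: no subterm is an
application P Q in which P or Q is a collection. -/
def NoGammaRedex : PTerm → Prop
  | .var _ => True
  | .lam _ M => NoGammaRedex M
  | .app P Q => ¬ IsColl P ∧ ¬ IsColl Q ∧ NoGammaRedex P ∧ NoGammaRedex Q
  | .coll P Q => NoGammaRedex P ∧ NoGammaRedex Q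

/-!
γ-normal forms are computed bottom-up. The normal form of every term is a collection
`collOf A As` whose components are redex-free non-collections. Collections of such forms
are again such forms (up to reassociation), abstraction keeps its body as one component,
and the application of two such forms is either already normal or a single γ-redex whose
contractum, the collection of all applications `Aᵢ Bⱼ`, is of the same shape: each `Aᵢ Bⱼ`
is redex-free because neither side is a collection.
-/

/-- The components of the contractum of `collOf M Ms` applied to `collOf N Ns`, in the order
used by `Gamma`. -/
def appProduct (M : PTerm) (Ms : List PTerm) (N : PTerm) (Ns : List PTerm) :
    PTerm × List PTerm :=
  (.app M N, Ns.map (.app M) ++ Ms.flatMap fun Mi => (N :: Ns).map (.app Mi))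

theorem mem_appProduct {M N P : PTerm} {Ms Ns : List PTerm}
    (hP : P ∈ (appProduct M Ms N Ns).1 :: (appProduct M Ms N Ns).2) :
    ∃ A ∈ M :: Ms, ∃ B ∈ N :: Ns, P = .app A B := by
  simp only [appProduct, List.mem_cons, List.mem_append, List.mem_map, List.mem_flatMap] at hP
  rcases hP with rfl | ⟨B, hB, rfl⟩ | ⟨A, hA, B, hB, rfl⟩
  · exact ⟨M, by simp, N, by simp, rfl⟩
  · exact ⟨M, by simp, B, by simp [hB], rfl⟩
  · exact ⟨A, by simp [hA], B, by simpa using hB, rfl⟩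

def gammaComponents : PTerm → PTerm × List PTerm
  | .var x => (.var x, [])
  | .lam x M => (.lam x (collOf (gammaComponents M).1 (gammaComponents M).2), [])
  | .coll M N =>
      ((gammaComponents M).1,
        (gammaComponents M).2 ++ (gammaComponents N).1 :: (gammaComponents N).2)
  | .app M N =>
      appProduct (gammaComponents M).1 (gammaComponents M).2
        (gammaComponents N).1 (gammaComponents N).2

def gammaNF (M : PTerm) : PTerm :=
  collOf (gammaComponents M).1 (gammaComponents M).2

theorem NoGammaRedex.collOf {M : PTerm} {Ms : List PTerm} (hM : NoGammaRedex M)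
    (hMs : ∀ P ∈ Ms, NoGammaRedex P) : NoGammaRedex (collOf M Ms) := by
  induction Ms generalizing M with
  | nil => exact hM
  | cons N Ms ih => exact ⟨hM, ih (hMs N (by simp)) fun P hP => hMs P (by simp [hP])⟩

theorem gammaComponents_normal (M : PTerm) :
    ∀ P ∈ (gammaComponents M).1 :: (gammaComponents M).2, NoGammaRedex P ∧ ¬ IsColl P := by
  induction M with
  | var x => simp [gammaComponents, NoGammaRedex, IsColl]
  | lam x M ih =>
    intro P hP
    simp only [gammaComponents, List.mem_singleton] at hP
    subst hP
    refine ⟨NoGammaRedex.collOf (ih _ (by simp)).1 fun Q hQ => (ih Q (by simp [hQ])).1, ?_⟩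
    simp [IsColl]
  | coll M N ihM ihN =>
    intro P hP
    simp only [gammaComponents, List.mem_cons, List.mem_append] at hP
    rcases hP with h | h | h | h
    · exact ihM P (by simp [h])
    · exact ihM P (by simp [h])
    · exact ihN P (by simp [h])
    · exact ihN P (by simp [h])
  | app M N ihM ihN =>
    intro P hP
    obtain ⟨A, hA, B, hB, rfl⟩ := mem_appProduct hP
    obtain ⟨hA, hAc⟩ := ihM A hA
    obtain ⟨hB, hBc⟩ := ihN B hB
    exact ⟨⟨hAc, hBc, hA, hB⟩, by simp [IsColl]⟩

theorem noGammaRedex_gammaNF (M : PTerm) : NoGammaRedex (gammaNF M) :=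
  NoGammaRedex.collOf (gammaComponents_normal M _ (by simp)).1
    fun P hP => (gammaComponents_normal M P (by simp [hP])).1

theorem cong_coll_collOf (M N : PTerm) (Ms Ns : List PTerm) :
    Cong (.coll (collOf M Ms) (collOf N Ns)) (collOf M (Ms ++ N :: Ns)) := by
  induction Ms generalizing M with
  | nil => exact .refl _
  | cons A Ms ih => exact (Cong.nest _ _ _).trans (.coll (.refl M) (ih A))

namespace RedG

theorem lift (f : PTerm → PTerm) (hstep : ∀ {M M'}, StepG M M' → StepG (f M) (f M'))
    (hcong : ∀ {M M'}, Cong M M' → Cong (f M) (f M')) {M M' : PTerm} (h : RedG M M') :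
    RedG (f M) (f M') :=
  Relation.ReflTransGen.lift f (fun _ _ h => h.imp hstep hcong) _ _ h

theorem lam (x : ℕ) {M M' : PTerm} (h : RedG M M') : RedG (.lam x M) (.lam x M') :=
  lift (.lam x) (.lam x) (.lam x) h

theorem app_collOf (M N : PTerm) (Ms Ns : List PTerm) :
    RedG (.app (collOf M Ms) (collOf N Ns))
      (collOf (appProduct M Ms N Ns).1 (appProduct M Ms N Ns).2) := by
  by_cases hn : Ms ≠ [] ∨ Ns ≠ []
  · exact .single (.inl (.gamma (.mk _ _ M N Ms Ns (.refl _) (.refl _) hn)))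
  · obtain ⟨rfl, rfl⟩ : Ms = [] ∧ Ns = [] := by simpa using hn
    exact .refl

end RedG

theorem redG_gammaNF (M : PTerm) : RedG M (gammaNF M) := by
  induction M with
  | var x => exact .refl
  | lam x M ih => exact RedG.lam x ih
  | coll M N ihM ihN => exact (RedG.coll ihM ihN).tail (.inr (cong_coll_collOf _ _ _ _))
  | app M N ihM ihN => exact (RedG.app ihM ihN).trans (RedG.app_collOf _ _ _ _)

/-- Existence of γ-normal forms: for every λ^p-term M there exists a λ^p-term
N such that M ↠_γ N and N contains no γ-redexes. -/
theorem gamma_normal_form_exists (M : PTerm) :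
    ∃ N : PTerm, RedG M N ∧ NoGammaRedex N :=
  ⟨gammaNF M, redG_gammaNF M, noGammaRedex_gammaNF M⟩
end
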